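/- Let I ⊆ ℝ be an interval and let (a,b,c) : I → ℝ³ be a differentiable solution of the gauged bracket Bach flow with a(t) > 0 for all t ∈ I. Then for every t ∈ I the function t ↦ b(t)²/a(t)² is differentiable and its derivative satisfies d/dt (b²/a²) ≤ −(2/3)·(b(t)²/a(t)²)·(a(t)² + b(t)² + c(t)²)². -/

import Mathlib

/-- First component of the right-hand side `F` of the gauged bracket Bach flow. -/
noncomputable def Fa (a b c : ℝ) : ℝ :=
  -(a / 48) * (44*a^4 + 72*a^2*b^2 - 5*a^2*c^2 + 28*b^4 + 24*b^2*c^2 - 4*c^4)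

/-- Second component of the right-hand side `F` of the gauged bracket Bach flow. -/
noncomputable def Fb (a b c : ℝ) : ℝ :=
  -(b / 48) * (60*a^4 + 104*a^2*b^2 + 57*a^2*c^2 + 44*b^4 + 104*b^2*c^2 + 60*c^4)

/-- Third component of the right-hand side `F` of the gauged bracket Bach flow. -/
noncomputable def Fc (a b c : ℝ) : ℝ :=
  -(c / 48) * (-4*a^4 + 24*a^2*b^2 - 5*a^2*c^2 + 28*b^4 + 72*b^2*c^2 + 44*c^4)

/-- `(a,b,c) : ℝ → ℝ³` is a differentiable solution of the gauged bracket Bach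
flow on the set `S ⊆ ℝ`. -/
def IsBachFlowSolution (a b c : ℝ → ℝ) (S : Set ℝ) : Prop :=
  ∀ t ∈ S,
    HasDerivAt a (Fa (a t) (b t) (c t)) t ∧
    HasDerivAt b (Fb (a t) (b t) (c t)) t ∧
    HasDerivAt c (Fc (a t) (b t) (c t)) t

/- Along the flow, `(b/a)' = (a b' - b a')/a² = -(b/a)·((a²+b²+c²)²/3 + c²(5a²/8 + b² + c²))`:
the linear combination `a·F_b - b·F_a` factors through `a b`, and what remains exceeds
`(a²+b²+c²)²/3` by a sum of squares multiplied by `c²`. -/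

theorem mul_Fb_sub_mul_Fa (a b c : ℝ) :
    a * Fb a b c - b * Fa a b c =
      -(a * b) * ((a ^ 2 + b ^ 2 + c ^ 2) ^ 2 / 3 + c ^ 2 * (5 / 8 * a ^ 2 + b ^ 2 + c ^ 2)) := by
  simp only [Fa, Fb]
  ring

theorem HasDerivAt.sq_div_sq {𝕜 : Type*} [NontriviallyNormedField 𝕜] {f g : 𝕜 → 𝕜}
    {f' g' t : 𝕜} (hf : HasDerivAt f f' t) (hg : HasDerivAt g g' t) (hg0 : g t ≠ 0) :
    HasDerivAt (fun s => f s ^ 2 / g s ^ 2) (2 * f t * (g t * f' - f t * g') / g t ^ 3) t := by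
  refine ((hf.fun_pow 2).fun_div (hg.fun_pow 2) (pow_ne_zero 2 hg0)).congr_deriv ?_
  field_simp
  ring

theorem two_mul_mul_Fb_sub_mul_Fa_div_le {a : ℝ} (ha : a ≠ 0) (b c : ℝ) :
    2 * b * (a * Fb a b c - b * Fa a b c) / a ^ 3 ≤
      -(2 / 3) * (b ^ 2 / a ^ 2) * (a ^ 2 + b ^ 2 + c ^ 2) ^ 2 := by
  have hrest : 0 ≤ b ^ 2 / a ^ 2 * (c ^ 2 * (5 / 8 * a ^ 2 + b ^ 2 + c ^ 2)) := by positivity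
  calc 2 * b * (a * Fb a b c - b * Fa a b c) / a ^ 3
      = -(2 / 3) * (b ^ 2 / a ^ 2) * (a ^ 2 + b ^ 2 + c ^ 2) ^ 2
          - 2 * (b ^ 2 / a ^ 2 * (c ^ 2 * (5 / 8 * a ^ 2 + b ^ 2 + c ^ 2))) := by
        rw [mul_Fb_sub_mul_Fa]
        field_simp
        ring
    _ ≤ -(2 / 3) * (b ^ 2 / a ^ 2) * (a ^ 2 + b ^ 2 + c ^ 2) ^ 2 := by linarith

theorem deriv_b_sq_div_a_sq_le_general (I : Set ℝ) (a b c : ℝ → ℝ)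
    (hsol : IsBachFlowSolution a b c I) (ha : ∀ t ∈ I, 0 < a t) :
    ∀ t ∈ I, ∃ d : ℝ, HasDerivAt (fun s => b s ^ 2 / a s ^ 2) d t ∧
      d ≤ -(2/3) * (b t ^ 2 / a t ^ 2) * (a t ^ 2 + b t ^ 2 + c t ^ 2) ^ 2 := by
  intro t ht
  obtain ⟨hda, hdb, -⟩ := hsol t ht
  have hat : a t ≠ 0 := (ha t ht).ne'
  exact ⟨_, hdb.sq_div_sq hda hat, two_mul_mul_Fb_sub_mul_Fa_div_le hat (b t) (c t)⟩

/-- along a solution of the gauged bracket Bach flow with `a > 0`,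
the function `b²/a²` is differentiable and
`d/dt (b²/a²) ≤ −(2/3)·(b²/a²)·(a² + b² + c²)²`. -/
theorem deriv_b_sq_div_a_sq_le (I : Set ℝ) (hI : I.OrdConnected) (a b c : ℝ → ℝ)
    (hsol : IsBachFlowSolution a b c I) (ha : ∀ t ∈ I, 0 < a t) :
    ∀ t ∈ I, ∃ d : ℝ, HasDerivAt (fun s => b s ^ 2 / a s ^ 2) d t ∧
      d ≤ -(2/3) * (b t ^ 2 / a t ^ 2) * (a t ^ 2 + b t ^ 2 + c t ^ 2) ^ 2 :=
  deriv_b_sq_div_a_sq_le_general I a b c hsol ha
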